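/- arXiv:1403.7038 — 2 statements merged into one kernel-verified Lean document; each statement's English description precedes it below -/
import Mathlib

section
/- Let T_0 > 0. Let A_{uu} be a symmetric positive definite real n×n matrix, A_{zz} a symmetric positive definite real m×m matrix, A_{pp} a symmetric positive semidefinite real k×k matrix, B_{up} a real n×k matrix whose associated linear map \mathbb{R}^k \to \mathbb{R}^n is injective, and B_{zp} a real m×k matrix. Let \zeta : [0,T_0] \to \mathbb{R}^n be continuously differentiable, \xi : [0,T_0] \to \mathbb{R}^k continuous, and \gamma_0 \in \mathbb{R}^k. Then there exist unique continuously differentiable functions \alpha : [0,T_0] \to \mathbb{R}^n, \beta : [0,T_0] \to \mathbb{R}^m, \gamma : [0,T_0] \to \mathbb{R}^k with \gamma(0) = \gamma_0 such that for all t \in [0,T_0]: A_{uu}\,\alpha(t) = B_{up}\,\gamma(t) + \zeta(t), A_{zz}\,\beta(t) = -B_{zp}\,\gamma(t), and B_{up}^T\,\dot\alpha(t) + A_{pp}\,\dot\gamma(t) - B_{zp}^T\,\beta(t) = \xi(t). -/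
/-!
Since `Auu` and `Azz` are invertible, the two constraint equations express `α` and `β` through
`γ`; substituting them into the balance equation leaves
`(Bupᵀ Auu⁻¹ Bup + App) γ' + Bzpᵀ Azz⁻¹ Bzp γ = ξ - Bupᵀ Auu⁻¹ ζ'`.
Injectivity of `Bup` makes `Bupᵀ Auu⁻¹ Bup` positive definite, so the matrix in front of `γ'` is
invertible even when `App` is only semidefinite. The DAE is therefore equivalent to a linear ODE
for `γ` with constant coefficients and continuous forcing: variation of constants solves it, and
Grönwall's inequality makes the solution unique.
-/

open Matrix Set

/-- The property of being a continuously differentiable solution of the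
differential-algebraic system arising from the semidiscrete three-field formulation of
Biot's consolidation model, in coefficient-vector (matrix) form. -/
def IsBiotDAESolution (T0 : ℝ) {n m k : ℕ}
    (Auu : Matrix (Fin n) (Fin n) ℝ) (Azz : Matrix (Fin m) (Fin m) ℝ)
    (App : Matrix (Fin k) (Fin k) ℝ) (Bup : Matrix (Fin n) (Fin k) ℝ)
    (Bzp : Matrix (Fin m) (Fin k) ℝ)
    (ζ : ℝ → (Fin n → ℝ)) (ξ : ℝ → (Fin k → ℝ)) (γ0 : Fin k → ℝ)
    (α : ℝ → (Fin n → ℝ)) (β : ℝ → (Fin m → ℝ)) (γ : ℝ → (Fin k → ℝ)) : Prop :=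
  ContDiffOn ℝ 1 α (Icc 0 T0) ∧ ContDiffOn ℝ 1 β (Icc 0 T0) ∧
    ContDiffOn ℝ 1 γ (Icc 0 T0) ∧ γ 0 = γ0 ∧
    ∀ t ∈ Icc (0:ℝ) T0,
      Auu.mulVec (α t) = Bup.mulVec (γ t) + ζ t ∧
      Azz.mulVec (β t) = -(Bzp.mulVec (γ t)) ∧
      Bupᵀ.mulVec (derivWithin α (Icc 0 T0) t) +
          App.mulVec (derivWithin γ (Icc 0 T0) t) - Bzpᵀ.mulVec (β t) = ξ t

section LinearODE

open NormedSpace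

variable {E : Type*} [NormedAddCommGroup E] [NormedSpace ℝ E]

/-- Variation of constants: `f t = exp (t A) (exp (-t₀ A) x₀ + ∫_{t₀}^t exp (-s A) (g s) ds)`. -/
theorem exists_hasDerivAt_linear_ode [CompleteSpace E] (A : E →L[ℝ] E) {g : ℝ → E}
    (hg : Continuous g) (t₀ : ℝ) (x₀ : E) :
    ∃ f : ℝ → E, f t₀ = x₀ ∧ ∀ t, HasDerivAt f (A (f t) + g t) t := by
  let +nondep : NormedAlgebra ℚ (E →L[ℝ] E) := .restrictScalars ℚ ℝ _
  have hcancel : ∀ (s : ℝ) (v : E), exp (s • A) (exp (-(s • A)) v) = v := fun s v => by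
    rw [← mul_apply_eq_comp, ← NormedSpace.exp_add_of_commute (Commute.refl _).neg_right,
      add_neg_cancel, NormedSpace.exp_zero, one_apply_eq_self]
  have hint : Continuous fun s : ℝ => exp (-(s • A)) (g s) :=
    (NormedSpace.exp_continuous.comp (continuous_id.smul continuous_const).neg).clm_apply hg
  set I : ℝ → E := fun t => ∫ s in t₀..t, exp (-(s • A)) (g s)
  refine ⟨fun t => exp (t • A) (exp (-(t₀ • A)) x₀ + I t), by simp [I, hcancel], fun t => ?_⟩
  have hI : HasDerivAt I (exp (-(t • A)) (g t)) t :=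
    intervalIntegral.integral_hasDerivAt_right (hint.intervalIntegrable _ _)
      hint.stronglyMeasurable.stronglyMeasurableAtFilter hint.continuousAt
  convert (hasDerivAt_exp_smul_const A t).clm_apply (hI.const_add (exp (-(t₀ • A)) x₀)) using 1
  rw [hcancel, mul_apply_eq_comp, ← mul_apply_eq_comp,
    ← ((Commute.refl A).smul_left t).exp_left.eq, mul_apply_eq_comp]

theorem exists_hasDerivWithinAt_Icc_linear_ode [CompleteSpace E] (A : E →L[ℝ] E) {a b : ℝ}
    (hab : a ≤ b) {g : ℝ → E} (hg : ContinuousOn g (Icc a b)) (x₀ : E) :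
    ∃ f : ℝ → E, f a = x₀ ∧
      ∀ t ∈ Icc a b, HasDerivWithinAt f (A (f t) + g t) (Icc a b) t := by
  obtain ⟨f, hf₀, hf⟩ :=
    exists_hasDerivAt_linear_ode A (hg.domRestrict.Icc_extend' (h := hab)) a x₀
  refine ⟨f, hf₀, fun t ht => ?_⟩
  simpa [IccExtend_of_mem hab _ ht] using (hf t).hasDerivWithinAt (s := Icc a b)

theorem eqOn_Icc_of_hasDerivWithinAt_linear_ode (A : E →L[ℝ] E) {a b : ℝ}
    {g f₁ f₂ : ℝ → E} (hf₁ : ∀ t ∈ Icc a b, HasDerivWithinAt f₁ (A (f₁ t) + g t) (Icc a b) t)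
    (hf₂ : ∀ t ∈ Icc a b, HasDerivWithinAt f₂ (A (f₂ t) + g t) (Icc a b) t)
    (ha : f₁ a = f₂ a) : EqOn f₁ f₂ (Icc a b) := by
  have hright : ∀ f : ℝ → E,
      (∀ t ∈ Icc a b, HasDerivWithinAt f (A (f t) + g t) (Icc a b) t) →
        ∀ t ∈ Ico a b, HasDerivWithinAt f (A (f t) + g t) (Ici t) t := fun f hf t ht =>
    (hf t (Ico_subset_Icc_self ht)).mono_of_mem_nhdsWithin (Icc_mem_nhdsGE_of_mem ht)
  refine ODE_solution_unique (v := fun t x => A x + g t) (K := ‖A‖₊)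
    (fun t => by simpa using A.lipschitz.add (LipschitzWith.const (g t)))
    (fun t ht => (hf₁ t ht).continuousWithinAt) (hright f₁ hf₁)
    (fun t ht => (hf₂ t ht).continuousWithinAt) (hright f₂ hf₂) ha

end LinearODE

section MatrixCalculus

theorem ContinuousOn.const_mulVec {X R m n : Type*} [TopologicalSpace X] [TopologicalSpace R]
    [NonUnitalNonAssocSemiring R] [IsTopologicalSemiring R] [Fintype n] (A : Matrix m n R)
    {f : X → n → R} {s : Set X} (hf : ContinuousOn f s) :
    ContinuousOn (fun x => A *ᵥ f x) s :=
  (continuous_const.matrix_mulVec continuous_id).comp_continuousOn hf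

variable {𝕜 : Type*} [NontriviallyNormedField 𝕜] [CompleteSpace 𝕜] {m n : Type*} [Fintype m]
  [Fintype n] (A : Matrix m n 𝕜) {f : 𝕜 → n → 𝕜} {s : Set 𝕜}

theorem HasDerivWithinAt.const_mulVec {f' : n → 𝕜} {t : 𝕜} (hf : HasDerivWithinAt f f' s t) :
    HasDerivWithinAt (fun t => A *ᵥ f t) (A *ᵥ f') s t :=
  (LinearMap.toContinuousLinearMap A.mulVecLin).hasFDerivAt.comp_hasDerivWithinAt t hf

theorem ContDiffOn.const_mulVec {k : WithTop ℕ∞} (hf : ContDiffOn 𝕜 k f s) :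
    ContDiffOn 𝕜 k (fun t => A *ᵥ f t) s :=
  (LinearMap.toContinuousLinearMap A.mulVecLin).contDiff.comp_contDiffOn hf

end MatrixCalculus

theorem Matrix.mulVec_eq_iff_eq_inv_mulVec {n R : Type*} [Fintype n] [DecidableEq n]
    [CommRing R] {A : Matrix n n R} (hA : IsUnit A) {x y : n → R} :
    A *ᵥ x = y ↔ x = A⁻¹ *ᵥ y := by
  have hdet := (isUnit_iff_isUnit_det A).mp hA
  constructor <;> rintro rfl
  · rw [mulVec_mulVec, nonsing_inv_mul A hdet, one_mulVec]
  · rw [mulVec_mulVec, mul_nonsing_inv A hdet, one_mulVec]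

theorem Matrix.posDef_transpose_mul_inv_mul_add {m n : Type*} [Fintype m] [Fintype n]
    [DecidableEq m] {A : Matrix m m ℝ} (hA : A.PosDef) {B : Matrix m n ℝ}
    (hB : Function.Injective B.mulVec) {C : Matrix n n ℝ} (hC : C.PosSemidef) :
    (Bᵀ * A⁻¹ * B + C).PosDef := by
  simpa using (hA.inv.conjTranspose_mul_mul_same hB).add_posSemidef hC

theorem biot_balance_eq_iff {ι κ ρ : Type*} [Fintype ι] [Fintype κ] [Fintype ρ] [DecidableEq ρ]
    (P : Matrix ι ι ℝ) (Q : Matrix κ κ ℝ) (App : Matrix ρ ρ ℝ) (Bup : Matrix ι ρ ℝ)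
    (Bzp : Matrix κ ρ ℝ) (hM : IsUnit (Bupᵀ * P * Bup + App)) (c dc x : ρ → ℝ) (dz : ι → ℝ) :
    Bupᵀ *ᵥ (P *ᵥ (Bup *ᵥ dc + dz)) + App *ᵥ dc - Bzpᵀ *ᵥ (-((Q * Bzp) *ᵥ c)) = x ↔
      dc = -((Bupᵀ * P * Bup + App)⁻¹ * (Bzpᵀ * Q * Bzp)) *ᵥ c +
        (Bupᵀ * P * Bup + App)⁻¹ *ᵥ (x - (Bupᵀ * P) *ᵥ dz) := by
  have hsplit : Bupᵀ *ᵥ (P *ᵥ (Bup *ᵥ dc + dz)) + App *ᵥ dc - Bzpᵀ *ᵥ (-((Q * Bzp) *ᵥ c)) =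
      (Bupᵀ * P * Bup + App) *ᵥ dc + ((Bupᵀ * P) *ᵥ dz + (Bzpᵀ * Q * Bzp) *ᵥ c) := by
    simp only [mulVec_add, add_mulVec, mulVec_neg, mulVec_mulVec, Matrix.mul_assoc]
    abel
  rw [hsplit, ← eq_sub_iff_add_eq, mulVec_eq_iff_eq_inv_mulVec hM]
  simp only [mulVec_sub, mulVec_add, neg_mulVec, ← mulVec_mulVec]
  constructor <;> intro h <;> rw [h] <;> abel

theorem isBiotDAESolution_iff {T0 : ℝ} (hT0 : 0 < T0) {n m k : ℕ}
    {Auu : Matrix (Fin n) (Fin n) ℝ} {Azz : Matrix (Fin m) (Fin m) ℝ}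
    {App : Matrix (Fin k) (Fin k) ℝ} {Bup : Matrix (Fin n) (Fin k) ℝ}
    {Bzp : Matrix (Fin m) (Fin k) ℝ} (hAuu : IsUnit Auu) (hAzz : IsUnit Azz)
    (hM : IsUnit (Bupᵀ * Auu⁻¹ * Bup + App)) {ζ : ℝ → Fin n → ℝ} (hζ : ContDiffOn ℝ 1 ζ (Icc 0 T0))
    {ξ : ℝ → Fin k → ℝ} (hξ : ContinuousOn ξ (Icc 0 T0)) (γ0 : Fin k → ℝ)
    (α : ℝ → Fin n → ℝ) (β : ℝ → Fin m → ℝ) (γ : ℝ → Fin k → ℝ) :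
    IsBiotDAESolution T0 Auu Azz App Bup Bzp ζ ξ γ0 α β γ ↔ γ 0 = γ0 ∧ ∀ t ∈ Icc 0 T0,
      α t = Auu⁻¹ *ᵥ (Bup *ᵥ γ t + ζ t) ∧ β t = -((Azz⁻¹ * Bzp) *ᵥ γ t) ∧
      HasDerivWithinAt γ (-((Bupᵀ * Auu⁻¹ * Bup + App)⁻¹ * (Bzpᵀ * Azz⁻¹ * Bzp)) *ᵥ γ t +
        (Bupᵀ * Auu⁻¹ * Bup + App)⁻¹ *ᵥ (ξ t - (Bupᵀ * Auu⁻¹) *ᵥ derivWithin ζ (Icc 0 T0) t))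
        (Icc 0 T0) t := by
  have hI : UniqueDiffOn ℝ (Icc 0 T0) := uniqueDiffOn_Icc hT0
  have hdζ : ∀ t ∈ Icc 0 T0, HasDerivWithinAt ζ (derivWithin ζ (Icc 0 T0) t) (Icc 0 T0) t :=
    fun t ht => ((hζ.differentiableOn one_ne_zero) t ht).hasDerivWithinAt
  have hαderiv : ∀ {γ' : Fin k → ℝ}, (∀ t ∈ Icc 0 T0, α t = Auu⁻¹ *ᵥ (Bup *ᵥ γ t + ζ t)) →
      ∀ t ∈ Icc 0 T0, HasDerivWithinAt γ γ' (Icc 0 T0) t →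
        derivWithin α (Icc 0 T0) t = Auu⁻¹ *ᵥ (Bup *ᵥ γ' + derivWithin ζ (Icc 0 T0) t) :=
    fun hα t ht hγ => ((((hγ.const_mulVec Bup).add (hdζ t ht)).const_mulVec Auu⁻¹).congr_of_mem
      hα ht).derivWithin (hI t ht)
  have hβ_iff : ∀ t, Azz *ᵥ β t = -(Bzp *ᵥ γ t) ↔ β t = -((Azz⁻¹ * Bzp) *ᵥ γ t) := fun t => by
    rw [mulVec_eq_iff_eq_inv_mulVec hAzz, mulVec_neg, mulVec_mulVec]
  constructor
  · rintro ⟨-, -, hγ, hγ0, heq⟩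
    have hα : ∀ t ∈ Icc 0 T0, α t = Auu⁻¹ *ᵥ (Bup *ᵥ γ t + ζ t) := fun t ht =>
      (mulVec_eq_iff_eq_inv_mulVec hAuu).1 (heq t ht).1
    refine ⟨hγ0, fun t ht => ⟨hα t ht, (hβ_iff t).1 (heq t ht).2.1, ?_⟩⟩
    have hγt := ((hγ.differentiableOn one_ne_zero) t ht).hasDerivWithinAt
    have hbalance := (heq t ht).2.2
    rw [hαderiv hα t ht hγt, (hβ_iff t).1 (heq t ht).2.1, biot_balance_eq_iff _ _ _ _ _ hM]
      at hbalance
    rwa [← hbalance]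
  · rintro ⟨hγ0, h⟩
    have hγ : ContDiffOn ℝ 1 γ (Icc 0 T0) := by
      have hγc : ContinuousOn γ (Icc 0 T0) := fun t ht => (h t ht).2.2.continuousWithinAt
      refine (contDiffOn_one_iff_derivWithin hI).2
        ⟨fun t ht => (h t ht).2.2.differentiableWithinAt, ?_⟩
      refine ContinuousOn.congr ?_ fun t ht => (h t ht).2.2.derivWithin (hI t ht)
      exact (hγc.const_mulVec _).add
        ((hξ.sub ((hζ.continuousOn_derivWithin hI le_rfl).const_mulVec _)).const_mulVec _)
    refine ⟨(((hγ.const_mulVec Bup).add hζ).const_mulVec Auu⁻¹).congr fun t ht => (h t ht).1,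
      (hγ.const_mulVec (Azz⁻¹ * Bzp)).neg.congr fun t ht => (h t ht).2.1, hγ, hγ0,
      fun t ht => ⟨(mulVec_eq_iff_eq_inv_mulVec hAuu).2 (h t ht).1, (hβ_iff t).2 (h t ht).2.1, ?_⟩⟩
    rw [hαderiv (fun t ht => (h t ht).1) t ht (h t ht).2.2, (h t ht).2.2.derivWithin (hI t ht),
      (h t ht).2.1, biot_balance_eq_iff _ _ _ _ _ hM]

/-- Theorem 3.1 of the paper in matrix form: the semidiscrete DAE system has a unique
continuously differentiable solution for any initial data `γ0`, with `App` only positive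
semidefinite (corresponding to the storage coefficient `c₀ ≥ 0`). -/
theorem biot_dae_wellposed (T0 : ℝ) (hT0 : 0 < T0) (n m k : ℕ)
    (Auu : Matrix (Fin n) (Fin n) ℝ) (hAuu : Auu.PosDef)
    (Azz : Matrix (Fin m) (Fin m) ℝ) (hAzz : Azz.PosDef)
    (App : Matrix (Fin k) (Fin k) ℝ) (hApp : App.PosSemidef)
    (Bup : Matrix (Fin n) (Fin k) ℝ) (hBup : Function.Injective Bup.mulVec)
    (Bzp : Matrix (Fin m) (Fin k) ℝ)
    (ζ : ℝ → (Fin n → ℝ)) (hζ : ContDiffOn ℝ 1 ζ (Icc 0 T0))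
    (ξ : ℝ → (Fin k → ℝ)) (hξ : ContinuousOn ξ (Icc 0 T0))
    (γ0 : Fin k → ℝ) :
    ∃ α : ℝ → (Fin n → ℝ), ∃ β : ℝ → (Fin m → ℝ), ∃ γ : ℝ → (Fin k → ℝ),
      IsBiotDAESolution T0 Auu Azz App Bup Bzp ζ ξ γ0 α β γ ∧
      ∀ α' β' γ', IsBiotDAESolution T0 Auu Azz App Bup Bzp ζ ξ γ0 α' β' γ' →
        ∀ t ∈ Icc (0:ℝ) T0, α' t = α t ∧ β' t = β t ∧ γ' t = γ t := by
  have hM := (posDef_transpose_mul_inv_mul_add hAuu hBup hApp).isUnit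
  have hsol := isBiotDAESolution_iff (Bzp := Bzp) hT0 hAuu.isUnit hAzz.isUnit hM hζ hξ γ0
  set M := Bupᵀ * Auu⁻¹ * Bup + App
  let A : (Fin k → ℝ) →L[ℝ] (Fin k → ℝ) :=
    LinearMap.toContinuousLinearMap (-(M⁻¹ * (Bzpᵀ * Azz⁻¹ * Bzp))).mulVecLin
  have hg : ContinuousOn (fun t => M⁻¹ *ᵥ (ξ t - (Bupᵀ * Auu⁻¹) *ᵥ derivWithin ζ (Icc 0 T0) t))
      (Icc 0 T0) :=
    (hξ.sub ((hζ.continuousOn_derivWithin (uniqueDiffOn_Icc hT0) le_rfl).const_mulVec _)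
      ).const_mulVec _
  obtain ⟨γ, hγ0, hγ⟩ := exists_hasDerivWithinAt_Icc_linear_ode A hT0.le hg γ0
  refine ⟨fun t => Auu⁻¹ *ᵥ (Bup *ᵥ γ t + ζ t), fun t => -((Azz⁻¹ * Bzp) *ᵥ γ t), γ,
    (hsol _ _ γ).2 ⟨hγ0, fun t ht => ⟨rfl, rfl, hγ t ht⟩⟩, fun α' β' γ' h' t ht => ?_⟩
  obtain ⟨hγ'0, h'⟩ := (hsol α' β' γ').1 h'
  have hγ'γ : EqOn γ' γ (Icc 0 T0) :=
    eqOn_Icc_of_hasDerivWithinAt_linear_ode A (fun s hs => (h' s hs).2.2) hγ (hγ'0.trans hγ0.symm)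
  exact ⟨by rw [(h' t ht).1, hγ'γ ht], by rw [(h' t ht).2.1, hγ'γ ht], hγ'γ ht⟩
end

section
/- Let \Delta t > 0. Let A be a symmetric positive definite real n×n matrix, A_z a symmetric positive definite real m×m matrix, A_p a symmetric positive semidefinite real k×k matrix, B a real n×k matrix whose associated linear map \mathbb{R}^k \to \mathbb{R}^n is injective, and C a real m×k matrix. Then the linear map (U, Z, P) \mapsto (A U - B P,\ A_z Z + C P,\ B^T U - \Delta t\, C^T Z + A_p P) from \mathbb{R}^n \times \mathbb{R}^m \times \mathbb{R}^k to itself is bijective. -/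
/-!
Pairing the three equations with `U`, `Δt • Z` and `P` makes the coupling terms cancel, since
`U ⬝ᵥ B P = P ⬝ᵥ Bᵀ U` and `Δt (Z ⬝ᵥ C P) = P ⬝ᵥ Δt Cᵀ Z`. What remains is the energy
`U ⬝ᵥ A U + Δt (Z ⬝ᵥ A_z Z) + P ⬝ᵥ A_p P`, a sum of nonnegative terms, so on the kernel
`U = 0` and `Z = 0`; then `B P = 0` and injectivity of `B` gives `P = 0`. An injective
endomorphism of a finite-dimensional space is bijective.
-/

open Matrix

variable {ι κ μ : Type*} [Fintype ι] [Fintype κ] [Fintype μ]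

section CommRing

variable {R : Type*} [CommRing R]

def backwardEulerMap (Δt : R) (A : Matrix ι ι R) (Az : Matrix κ κ R) (Ap : Matrix μ μ R)
    (B : Matrix ι μ R) (C : Matrix κ μ R) :
    ((ι → R) × (κ → R) × (μ → R)) →ₗ[R] (ι → R) × (κ → R) × (μ → R) :=
  let U := LinearMap.fst R (ι → R) ((κ → R) × (μ → R))
  let Z := LinearMap.fst R (κ → R) (μ → R) ∘ₗ LinearMap.snd R (ι → R) ((κ → R) × (μ → R))
  let P := LinearMap.snd R (κ → R) (μ → R) ∘ₗ LinearMap.snd R (ι → R) ((κ → R) × (μ → R))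
  (A.mulVecLin ∘ₗ U - B.mulVecLin ∘ₗ P).prod <|
    (Az.mulVecLin ∘ₗ Z + C.mulVecLin ∘ₗ P).prod
      (Bᵀ.mulVecLin ∘ₗ U - Δt • Cᵀ.mulVecLin ∘ₗ Z + Ap.mulVecLin ∘ₗ P)

theorem backwardEulerMap_apply (Δt : R) (A : Matrix ι ι R) (Az : Matrix κ κ R)
    (Ap : Matrix μ μ R) (B : Matrix ι μ R) (C : Matrix κ μ R) (U : ι → R) (Z : κ → R)
    (P : μ → R) :
    backwardEulerMap Δt A Az Ap B C (U, Z, P) =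
      (A *ᵥ U - B *ᵥ P, Az *ᵥ Z + C *ᵥ P, Bᵀ *ᵥ U - Δt • Cᵀ *ᵥ Z + Ap *ᵥ P) :=
  rfl

theorem backwardEulerMap_energy (Δt : R) (A : Matrix ι ι R) (Az : Matrix κ κ R)
    (Ap : Matrix μ μ R) (B : Matrix ι μ R) (C : Matrix κ μ R) (U : ι → R) (Z : κ → R)
    (P : μ → R) :
    let F := backwardEulerMap Δt A Az Ap B C (U, Z, P)
    U ⬝ᵥ F.1 + Δt * (Z ⬝ᵥ F.2.1) + P ⬝ᵥ F.2.2 =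
      U ⬝ᵥ A *ᵥ U + Δt * (Z ⬝ᵥ Az *ᵥ Z) + P ⬝ᵥ Ap *ᵥ P := by
  simp only [backwardEulerMap_apply, dotProduct_sub, dotProduct_add, dotProduct_smul,
    smul_eq_mul, dotProduct_transpose_mulVec]
  ring

end CommRing

theorem Matrix.PosDef.eq_zero_of_dotProduct_mulVec_nonpos {R : Type*} [Ring R]
    [PartialOrder R] [StarRing R] [TrivialStar R] {M : Matrix ι ι R} (hM : M.PosDef)
    {x : ι → R} (h : x ⬝ᵥ M *ᵥ x ≤ 0) : x = 0 := by
  by_contra hx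
  have := hM.dotProduct_mulVec_pos hx
  rw [star_trivial] at this
  exact this.not_ge h

section OrderedRing

variable {𝕜 : Type*} [CommRing 𝕜] [LinearOrder 𝕜] [IsStrictOrderedRing 𝕜] [StarRing 𝕜]
  [TrivialStar 𝕜]

theorem backwardEulerMap_injective {Δt : 𝕜} (hΔt : 0 < Δt) {A : Matrix ι ι 𝕜}
    (hA : A.PosDef) {Az : Matrix κ κ 𝕜} (hAz : Az.PosDef) {Ap : Matrix μ μ 𝕜}
    (hAp : Ap.PosSemidef) {B : Matrix ι μ 𝕜} (hB : Function.Injective B.mulVec)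
    (C : Matrix κ μ 𝕜) :
    Function.Injective (backwardEulerMap Δt A Az Ap B C) := by
  rw [← LinearMap.ker_eq_bot, LinearMap.ker_eq_bot']
  rintro ⟨U, Z, P⟩ hF
  have energy := backwardEulerMap_energy Δt A Az Ap B C U Z P
  simp only [hF, Prod.fst_zero, Prod.snd_zero, dotProduct_zero, mul_zero, add_zero] at energy
  have hqU : 0 ≤ U ⬝ᵥ A *ᵥ U := by simpa using hA.posSemidef.dotProduct_mulVec_nonneg U
  have hqZ : 0 ≤ Z ⬝ᵥ Az *ᵥ Z := by simpa using hAz.posSemidef.dotProduct_mulVec_nonneg Z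
  have hqP : 0 ≤ P ⬝ᵥ Ap *ᵥ P := by simpa using hAp.dotProduct_mulVec_nonneg P
  have hU : U = 0 := hA.eq_zero_of_dotProduct_mulVec_nonpos (by nlinarith)
  have hZ : Z = 0 := hAz.eq_zero_of_dotProduct_mulVec_nonpos (by nlinarith)
  have hBP : B *ᵥ P = B *ᵥ 0 := by
    simpa [hU, backwardEulerMap_apply] using congrArg Prod.fst hF
  simp [hU, hZ, hB hBP]

end OrderedRing

theorem backwardEulerMap_bijective {𝕜 : Type*} [Field 𝕜] [LinearOrder 𝕜]
    [IsStrictOrderedRing 𝕜] [StarRing 𝕜] [TrivialStar 𝕜] {Δt : 𝕜} (hΔt : 0 < Δt) {A : Matrix ι ι 𝕜}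
    (hA : A.PosDef) {Az : Matrix κ κ 𝕜} (hAz : Az.PosDef) {Ap : Matrix μ μ 𝕜}
    (hAp : Ap.PosSemidef) {B : Matrix ι μ 𝕜} (hB : Function.Injective B.mulVec)
    (C : Matrix κ μ 𝕜) :
    Function.Bijective (backwardEulerMap Δt A Az Ap B C) :=
  have hinj := backwardEulerMap_injective hΔt hA hAz hAp hB C
  ⟨hinj, LinearMap.injective_iff_surjective.mp hinj⟩

/-- Well-posedness of one backward Euler step of the fully discrete scheme, in matrix form:
the linear map `(U, Z, P) ↦ (A U - B P, A_z Z + C P, Bᵀ U - Δt Cᵀ Z + A_p P)` is bijective. -/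
theorem backward_euler_step_bijective (Δt : ℝ) (hΔt : 0 < Δt) (n m k : ℕ)
    (A : Matrix (Fin n) (Fin n) ℝ) (hA : A.PosDef)
    (Az : Matrix (Fin m) (Fin m) ℝ) (hAz : Az.PosDef)
    (Ap : Matrix (Fin k) (Fin k) ℝ) (hAp : Ap.PosSemidef)
    (B : Matrix (Fin n) (Fin k) ℝ) (hB : Function.Injective B.mulVec)
    (C : Matrix (Fin m) (Fin k) ℝ) :
    Function.Bijective
      (fun UZP : (Fin n → ℝ) × (Fin m → ℝ) × (Fin k → ℝ) =>
        (A.mulVec UZP.1 - B.mulVec UZP.2.2,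
         Az.mulVec UZP.2.1 + C.mulVec UZP.2.2,
         Bᵀ.mulVec UZP.1 - Δt • Cᵀ.mulVec UZP.2.1 + Ap.mulVec UZP.2.2)) :=
  backwardEulerMap_bijective hΔt hA hAz hAp hB C
end
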